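/- For every permutation u of [n], the cardinality of the cross equivalence class of u is a power of 2. -/

import Mathlib

abbrev Word := List ℕ+

/-- Height (letter-sum) of a word. -/
def ht (w : Word) : ℕ := (w.map (fun x => (x : ℕ))).sum

/-- Embedding index set of `u` into `w` (1-based positions). -/
def Em (u w : Word) : Set ℕ :=
  {j | 1 ≤ j ∧ j - 1 + u.length ≤ w.length ∧
    ∀ k, k < u.length → u.getD k 1 ≤ w.getD (j - 1 + k) 1}

/-- Super-strong Wilf equivalence. -/
def SSWilf (u v : Word) : Prop :=
  ∃ f : Word → Word, Function.Bijective f ∧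
    (∀ w, (f w).length = w.length ∧ ht (f w) = ht w) ∧
    (∀ w, Em u w = Em v (f w))

/-- `w` is a permutation of `[n]`. -/
def IsPerm (n : ℕ) (w : Word) : Prop :=
  w.length = n ∧ ∀ k : ℕ, 1 ≤ k → k ≤ n → (w.map (fun x => (x : ℕ))).count k = 1

/-- 1-based position of the letter `k` in `u`. -/
def pos (u : Word) (k : ℕ) : ℕ := (u.map (fun x => (x : ℕ))).idxOf k + 1

/-- `E` is an embedding set satisfying the overlap condition for words of length `n`. -/
def IsEmbSet (n : ℕ) (E : Finset ℕ) : Prop :=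
  1 ∈ E ∧ (∀ a ∈ E, 1 ≤ a) ∧
  ∀ a ∈ E, (∀ b ∈ E, b ≤ a) ∨ ∃ b ∈ E, a < b ∧ b ≤ a + (n - 1)

/-- The letter at (1-based) position `p` of the (pre-)cluster of `u` on `E`. -/
def clusterAt (u : Word) (E : Finset ℕ) (p : ℕ) : ℕ+ :=
  (E.sup (fun a => if a ≤ p ∧ p < a + u.length then ((u.getD (p - a) 1 : ℕ+) : ℕ) else 1)).toPNat'

/-- The minimal cluster of `u` with embedding set `E`. -/
def mcluster (u : Word) (E : Finset ℕ) : Word :=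
  (List.range (E.sup id - 1 + u.length)).map (fun j => clusterAt u E (j + 1))

/-- The extended minimal cluster of `u` on `E` with prescribed length `n`. -/
def extCluster (u : Word) (E : Finset ℕ) (n : ℕ) : Word :=
  (List.range n).map (fun j => clusterAt u E (j + 1))

/-- The multiset `i⁺(u)` of distances from the letter `i` to larger letters. -/
def iplus (n : ℕ) (u : Word) (i : ℕ) : Multiset ℕ :=
  (Multiset.Icc (i + 1) n).map (fun j => Nat.dist (pos u i) (pos u j))

/-- Cross equivalence of permutations of `[n]`. -/
def CrossEq (n : ℕ) (u v : Word) : Prop :=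
  ∀ i, 1 ≤ i → i ≤ n - 1 → iplus n u i = iplus n v i

/-- Increasing list of (1-based) positions in `u` of the letters `≥ i`. -/
def posList (u : Word) (i : ℕ) : List ℕ :=
  ((List.range u.length).filter (fun k => i ≤ ((u.getD k 1 : ℕ+) : ℕ))).map (· + 1)

/-- `Δᵢ(u⁻¹)`: consecutive differences of positions of letters `≥ i` in `u`. -/
def Delta (u : Word) (i : ℕ) : List ℕ :=
  List.zipWith (fun a b => b - a) (posList u i) (posList u i).tail

/-- Shift `(p-1) + E` of an embedding set. -/
def shiftSet (p : ℕ) (E : Finset ℕ) : Finset ℕ := E.image (fun e => p - 1 + e)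

/-!
Record a permutation `v` of `[n]` by its position vector `(pos v 1, …, pos v n)`. Then `v` is
cross equivalent to `u` iff, for each `i`, the multiset of distances from the `i`-th entry to the
later entries is the same as for `u`. Build such a vector entry by entry: if `A` is the set of
positions not used yet, the next entry `x ∈ A` must have a prescribed multiset of distances to
`A \ {x}`. If two entries `x ≠ y` qualify, they have the same distances to all of `A`, and
comparing largest distances and peeling off the extreme points of `A` shows that `A` is symmetric
under `a ↦ x + y - a`. So there are at most two choices, and when there are two, this reflection
maps `A \ {x}` onto `A \ {y}` preserving all distances, so both choices have equally many
completions. Hence the class has `0` or `2 ^ k` elements, and it contains `u`.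
-/

namespace CrossClass

def dists (x : ℤ) (s : Multiset ℤ) : Multiset ℕ := s.map fun a => (x - a).natAbs

def profile : List ℤ → List (Multiset ℕ)
  | [] => []
  | x :: t => dists x t :: profile t

@[simp] lemma profile_nil : profile [] = [] := rfl

@[simp] lemma profile_cons (x : ℤ) (t : List ℤ) :
    profile (x :: t) = dists x t :: profile t := rfl

lemma profile_eq_nil_iff {l : List ℤ} : profile l = [] ↔ l = [] := by
  cases l <;> simp

lemma profile_map_sub (s : ℤ) (l : List ℤ) : profile (l.map (s - ·)) = profile l := by
  induction l with
  | nil => rfl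
  | cons x t ih =>
    simp only [List.map_cons, profile_cons, ih, dists, Multiset.map_coe, List.map_map]
    congr 2
    exact List.map_congr_left fun a _ => by simp only [Function.comp_apply]; omega

section Reflection

variable {A : Finset ℤ}

lemma sup_dists (x : ℤ) (hA : A.Nonempty) :
    (dists x A.val).sup = max (x - A.min' hA).natAbs (x - A.max' hA).natAbs := by
  refine le_antisymm (Multiset.sup_le.mpr ?_) (max_le ?_ ?_)
  · simp only [dists, Multiset.mem_map]
    rintro _ ⟨a, ha, rfl⟩
    have := A.min'_le a ha
    have := A.le_max' a ha
    omega
  · exact Multiset.le_sup (Multiset.mem_map_of_mem _ (A.min'_mem hA))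
  · exact Multiset.le_sup (Multiset.mem_map_of_mem _ (A.max'_mem hA))

lemma add_eq_min'_add_max' {x y : ℤ} (hxy : x ≠ y) (h : dists x A.val = dists y A.val)
    (hA : A.Nonempty) : x + y = A.min' hA + A.max' hA := by
  have hsup := congrArg Multiset.sup h
  rw [sup_dists x hA, sup_dists y hA] at hsup
  have := A.min'_le_max' hA
  omega

theorem image_sub_eq_of_dists_eq {x y : ℤ} (hxy : x ≠ y) (h : dists x A.val = dists y A.val) :
    A.image (x + y - ·) = A := by
  induction hN : A.card using Nat.strong_induction_on generalizing A with
  | _ N ih =>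
  rcases A.eq_empty_or_nonempty with rfl | hA
  · simp
  have hmid := add_eq_min'_add_max' hxy h hA
  set m := A.min' hA
  set M := A.max' hA
  have hm : m ∈ A := A.min'_mem hA
  have hM : M ∈ A := A.max'_mem hA
  rcases (A.min'_le_max' hA).eq_or_lt with hmM | hmM
  · have hA1 : A = {m} := Finset.eq_singleton_iff_unique_mem.mpr ⟨hm, fun a ha => by
      have := A.min'_le a ha; have := A.le_max' a ha; omega⟩
    rw [hA1, Finset.image_singleton]
    congr 1
    omega
  · -- the reflection swaps `m` and `M`; peel them off and recurse
    set B := (A.erase m).erase M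
    have hM' : M ∈ A.erase m := Finset.mem_erase.mpr ⟨hmM.ne', hM⟩
    have hval : A.val = m ::ₘ M ::ₘ B.val :=
      (Multiset.cons_erase hm).symm.trans (congrArg _ (Multiset.cons_erase hM').symm)
    have hB : dists x B.val = dists y B.val := by
      simp only [hval, dists, Multiset.map_cons] at h
      rw [show (y - m).natAbs = (x - M).natAbs by omega,
        show (y - M).natAbs = (x - m).natAbs by omega, Multiset.cons_swap] at h
      exact Multiset.cons_inj_right _ |>.mp (Multiset.cons_inj_right _ |>.mp h)
    have hcard : B.card < N := by
      rw [← hN, Finset.card_erase_of_mem hM', Finset.card_erase_of_mem hm]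
      have := Finset.card_pos.mpr hA
      omega
    have hAB : A = insert m (insert M B) := by
      rw [Finset.insert_erase hM', Finset.insert_erase hm]
    rw [hAB, Finset.image_insert, Finset.image_insert, ih _ hcard hB rfl,
      show x + y - m = M by omega, show x + y - M = m by omega, Finset.insert_comm]

/-- Summing over `A`: a centre of symmetry `s` satisfies `card A * s = 2 * ∑ a ∈ A, a`. -/
lemma eq_of_image_sub_eq (hA : A.Nonempty) {s t : ℤ} (hs : A.image (s - ·) = A)
    (ht : A.image (t - ·) = A) : s = t := by
  have key : ∀ r, A.image (r - ·) = A → A.card * r = 2 * ∑ a ∈ A, a := by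
    intro r hr
    have hsum := congrArg (fun B => ∑ a ∈ B, a) hr
    rw [Finset.sum_image (fun a _ b _ hab => sub_right_injective hab), Finset.sum_sub_distrib,
      Finset.sum_const, nsmul_eq_mul] at hsum
    linarith
  exact mul_left_cancel₀ (by exact_mod_cast (Finset.card_pos.mpr hA).ne')
    ((key s hs).trans (key t ht).symm)

end Reflection

/-- The possible first entries of a listing of `A` whose profile starts with `c`. -/
def heads (A : Finset ℤ) (c : Multiset ℕ) : Finset ℤ :=
  A.filter fun x => dists x (A.erase x).val = c

def listingsWithProfile (A : Finset ℤ) (cs : List (Multiset ℕ)) : Finset (List ℤ) :=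
  A.val.lists.toFinset.filter fun l => profile l = cs

variable {A : Finset ℤ} {c : Multiset ℕ} {cs : List (Multiset ℕ)}

lemma mem_heads {x : ℤ} : x ∈ heads A c ↔ x ∈ A ∧ dists x (A.erase x).val = c :=
  Finset.mem_filter

lemma mem_listingsWithProfile {l : List ℤ} :
    l ∈ listingsWithProfile A cs ↔ (l : Multiset ℤ) = A.val ∧ profile l = cs := by
  simp [listingsWithProfile, Multiset.mem_lists_iff, eq_comm]

lemma image_sub_eq_of_mem_heads {x y : ℤ} (hx : x ∈ heads A c) (hy : y ∈ heads A c)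
    (hxy : x ≠ y) : A.image (x + y - ·) = A := by
  have hval : ∀ z ∈ heads A c, dists z A.val = 0 ::ₘ c := by
    intro z hz
    obtain ⟨hzA, hzc⟩ := mem_heads.mp hz
    rw [← hzc, ← Multiset.cons_erase (Finset.mem_val.mpr hzA)]
    simp [dists]
  exact image_sub_eq_of_dists_eq hxy ((hval x hx).trans (hval y hy).symm)

lemma card_heads_le_two : (heads A c).card ≤ 2 := by
  by_contra! h
  obtain ⟨x, hx, y, hy, z, hz, hxy, hxz, hyz⟩ := Finset.two_lt_card.mp h
  have := eq_of_image_sub_eq ⟨x, (mem_heads.mp hx).1⟩ (image_sub_eq_of_mem_heads hx hy hxy)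
    (image_sub_eq_of_mem_heads hx hz hxz)
  omega

lemma cons_coe_eq_val_iff {x : ℤ} {t : List ℤ} :
    x ::ₘ (t : Multiset ℤ) = A.val ↔ x ∈ A ∧ (t : Multiset ℤ) = (A.erase x).val := by
  constructor
  · intro h
    have hx : x ∈ A := by simp [← Finset.mem_val, ← h]
    refine ⟨hx, ?_⟩
    rw [Finset.erase_val, ← h, Multiset.erase_cons_head]
  · rintro ⟨hx, ht⟩
    rw [ht]
    exact Multiset.cons_erase hx

lemma listingsWithProfile_cons :
    listingsWithProfile A (c :: cs) =
      (heads A c).biUnion fun x => (listingsWithProfile (A.erase x) cs).image (x :: ·) := by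
  ext l
  rcases l with _ | ⟨x, t⟩
  · simp [mem_listingsWithProfile]
  · simp only [mem_listingsWithProfile, Finset.mem_biUnion, Finset.mem_image, List.cons.injEq,
      profile_cons, mem_heads, ← Multiset.cons_coe, cons_coe_eq_val_iff]
    constructor
    · rintro ⟨⟨hx, ht⟩, hc, hcs⟩
      exact ⟨x, ⟨hx, ht ▸ hc⟩, t, ⟨ht, hcs⟩, rfl, rfl⟩
    · rintro ⟨x, ⟨hx, hc⟩, t, ⟨ht, hcs⟩, rfl, rfl⟩
      exact ⟨⟨hx, ht⟩, ht ▸ hc, hcs⟩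

lemma card_listingsWithProfile_cons :
    (listingsWithProfile A (c :: cs)).card =
      ∑ x ∈ heads A c, (listingsWithProfile (A.erase x) cs).card := by
  rw [listingsWithProfile_cons, Finset.card_biUnion]
  · exact Finset.sum_congr rfl fun x _ => Finset.card_image_of_injective _ List.cons_injective
  · intro x _ y _ hxy
    simp only [Finset.disjoint_left, Finset.mem_image]
    rintro _ ⟨t, -, rfl⟩ ⟨t', -, h⟩
    exact hxy (List.cons.inj h).1.symm

lemma map_sub_mem_listingsWithProfile (s : ℤ) {l : List ℤ}
    (hl : l ∈ listingsWithProfile A cs) :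
    l.map (s - ·) ∈ listingsWithProfile (A.image (s - ·)) cs := by
  obtain ⟨hA, hcs⟩ := mem_listingsWithProfile.mp hl
  refine mem_listingsWithProfile.mpr ⟨?_, by rw [profile_map_sub, hcs]⟩
  rw [Finset.image_val_of_injOn (sub_right_injective.injOn), ← hA, Multiset.map_coe]

lemma card_listingsWithProfile_image_sub (s : ℤ) :
    (listingsWithProfile (A.image (s - ·)) cs).card = (listingsWithProfile A cs).card := by
  have hinv : ∀ l : List ℤ, (l.map (s - ·)).map (s - ·) = l := fun l => by simp
  have hA : (A.image (s - ·)).image (s - ·) = A := by simp [Finset.image_image]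
  refine (Finset.card_nbij' (List.map (s - ·)) (List.map (s - ·)) ?_ ?_ (fun l _ => hinv l)
    (fun l _ => hinv l)).symm
  · exact fun l hl => map_sub_mem_listingsWithProfile s hl
  · intro l hl
    simpa [hA] using map_sub_mem_listingsWithProfile (A := A.image (s - ·)) s hl

theorem card_listingsWithProfile (A : Finset ℤ) (cs : List (Multiset ℕ)) :
    (listingsWithProfile A cs).card = 0 ∨ ∃ k, (listingsWithProfile A cs).card = 2 ^ k := by
  induction cs generalizing A with
  | nil =>
    have : (listingsWithProfile A []).card ≤ 1 := Finset.card_le_one.mpr fun l hl l' hl' => by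
      rw [mem_listingsWithProfile, profile_eq_nil_iff] at hl hl'
      rw [hl.2, hl'.2]
    interval_cases h : (listingsWithProfile A []).card
    · exact Or.inl rfl
    · exact Or.inr ⟨0, rfl⟩
  | cons c cs ih =>
    rw [card_listingsWithProfile_cons]
    have := card_heads_le_two (A := A) (c := c)
    interval_cases h : (heads A c).card
    · simp [Finset.card_eq_zero.mp h]
    · obtain ⟨x, hx⟩ := Finset.card_eq_one.mp h
      simpa [hx] using ih (A.erase x)
    · obtain ⟨x, y, hxy, hxy'⟩ := Finset.card_eq_two.mp h
      have hrefl := image_sub_eq_of_mem_heads (hxy' ▸ Finset.mem_insert_self x {y})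
        (hxy' ▸ Finset.mem_insert_of_mem (Finset.mem_singleton_self y)) hxy
      have hy : A.erase y = (A.erase x).image (x + y - ·) := by
        rw [Finset.image_erase sub_right_injective, hrefl, add_sub_cancel_left]
      rw [hxy', Finset.sum_pair hxy, hy, card_listingsWithProfile_image_sub, ← two_mul]
      rcases ih (A.erase x) with h0 | ⟨k, hk⟩
      · exact Or.inl (by rw [h0, mul_zero])
      · exact Or.inr ⟨k + 1, by rw [hk, pow_succ, mul_comm]⟩

/-- For a permutation of `1, …, n` in one-line notation, its inverse in one-line notation. -/
def invList (n : ℕ) (w : List ℕ) : List ℕ := (List.range' 1 n).map fun k => w.idxOf k + 1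

section InvList

variable {n : ℕ} {w : List ℕ}

lemma invList_perm (hw : w.Perm (List.range' 1 n)) : (invList n w).Perm (List.range' 1 n) := by
  have hmem : ∀ k ∈ List.range' 1 n, k ∈ w := fun k hk => hw.mem_iff.mpr hk
  have hlen : w.length = n := by simpa using hw.length_eq
  refine (List.Nodup.subperm ?_ ?_).perm_of_length_le (by simp [invList])
  · refine (List.nodup_range' (s := 1) (n := n)).map_on fun a ha b hb hab => ?_
    exact (List.idxOf_inj (hmem a ha)).mp (by omega)
  · intro x hx
    obtain ⟨k, hk, rfl⟩ := List.mem_map.mp hx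
    have := List.idxOf_lt_length_iff.mpr (hmem k hk)
    rw [List.mem_range'_1]
    omega

lemma getElem_invList {i : ℕ} (hi : i < (invList n w).length) :
    (invList n w)[i] = w.idxOf (i + 1) + 1 := by
  simp [invList, add_comm]

lemma invList_invList (hw : w.Perm (List.range' 1 n)) : invList n (invList n w) = w := by
  have hlen : w.length = n := by simpa using hw.length_eq
  have hnd : (invList n w).Nodup := (invList_perm hw).nodup_iff.mpr (List.nodup_range' _)
  have hwnd : w.Nodup := hw.nodup_iff.mpr (List.nodup_range' _)
  refine List.ext_getElem (by simp [invList, hlen]) fun i hi hi' => ?_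
  have hj := List.mem_range'_1.mp (hw.mem_iff.mp (List.getElem_mem hi'))
  have hinv : (invList n w)[w[i] - 1]'(by simp [invList]; omega) = i + 1 := by
    rw [getElem_invList, Nat.sub_add_cancel hj.1, hwnd.idxOf_getElem]
  rw [getElem_invList, ← hinv, hnd.idxOf_getElem]
  omega

end InvList

/-- In `IsPerm` and `pos` the coercion `Word → List ℕ` elaborates through the list monad. -/
lemma map_coe_eq_map_val (v : Word) : v.map (fun x => (x : ℕ)) = v.map PNat.val := by
  induction v <;> simp_all

lemma isPerm_iff_perm {n : ℕ} {v : Word} :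
    IsPerm n v ↔ (v.map PNat.val).Perm (List.range' 1 n) := by
  rw [IsPerm, map_coe_eq_map_val]
  constructor
  · rintro ⟨hlen, hcount⟩
    refine (List.subperm_ext_iff.mpr fun k hk => ?_).perm_of_length_le (by simp [hlen]) |>.symm
    obtain ⟨hk1, hk2⟩ := List.mem_range'_1.mp hk
    rw [List.count_eq_one_of_mem (List.nodup_range' _) hk, hcount k hk1 (by omega)]
  · intro h
    refine ⟨by simpa using h.length_eq, fun k hk1 hk2 => ?_⟩
    rw [h.count_eq,
      List.count_eq_one_of_mem (List.nodup_range' _) (List.mem_range'_1.mpr ⟨hk1, by omega⟩)]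

def positions (n : ℕ) (v : Word) : List ℤ := (List.range' 1 n).map fun k => (pos v k : ℤ)

lemma positions_eq_map_invList (n : ℕ) (v : Word) :
    positions n v = (invList n (v.map PNat.val)).map (↑) := by
  simp only [positions, invList, pos, map_coe_eq_map_val, List.map_map]
  rfl

lemma coe_eq_val_castIcc_iff {n : ℕ} {l : List ℤ} :
    (l : Multiset ℤ) = ((Finset.Icc 1 n).map Nat.castEmbedding).val ↔
      ∃ w : List ℕ, w.Perm (List.range' 1 n) ∧ l = w.map (↑) := by
  have hval : ((Finset.Icc 1 n).map Nat.castEmbedding).val =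
      ((List.range' 1 n).map (Nat.cast : ℕ → ℤ) : Multiset ℤ) := by
    simp [Finset.map_val]; rfl
  rw [hval, Multiset.coe_eq_coe]
  constructor
  · intro h
    refine ⟨l.map Int.toNat, by simpa [Function.comp_def] using h.map Int.toNat, ?_⟩
    rw [List.map_map]
    refine ((List.map_congr_left fun a ha => ?_).trans (List.map_id l)).symm
    obtain ⟨k, -, rfl⟩ := List.mem_map.mp (h.mem_iff.mp ha)
    simp
  · rintro ⟨w, hw, rfl⟩
    exact hw.map _

lemma coe_positions {n : ℕ} {v : Word} (hv : IsPerm n v) :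
    (positions n v : Multiset ℤ) = ((Finset.Icc 1 n).map Nat.castEmbedding).val :=
  coe_eq_val_castIcc_iff.mpr
    ⟨_, invList_perm (isPerm_iff_perm.mp hv), positions_eq_map_invList n v⟩

lemma image_positions (n : ℕ) : positions n '' {v | IsPerm n v} =
    {l : List ℤ | (l : Multiset ℤ) = ((Finset.Icc 1 n).map Nat.castEmbedding).val} := by
  refine Set.Subset.antisymm (Set.image_subset_iff.mpr fun v hv => coe_positions hv) ?_
  intro l hl
  obtain ⟨w, hw, rfl⟩ := coe_eq_val_castIcc_iff.mp hl
  have hinv := invList_perm hw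
  have hletters : ((invList n w).map Nat.toPNat').map PNat.val = invList n w := by
    rw [List.map_map]
    refine (List.map_congr_left fun a ha => ?_).trans (List.map_id _)
    have := (List.mem_range'_1.mp (hinv.mem_iff.mp ha)).1
    simp [Nat.toPNat'_coe, show 0 < a by omega]
  refine ⟨(invList n w).map Nat.toPNat', isPerm_iff_perm.mpr (by rwa [hletters]), ?_⟩
  rw [positions_eq_map_invList, hletters, invList_invList hw]

lemma positions_injOn (n : ℕ) : Set.InjOn (positions n) {v | IsPerm n v} := by
  intro v hv v' hv' h
  rw [positions_eq_map_invList, positions_eq_map_invList] at h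
  have h' := congrArg (invList n) (List.map_injective_iff.mpr Nat.cast_injective h)
  rw [invList_invList (isPerm_iff_perm.mp hv), invList_invList (isPerm_iff_perm.mp hv')] at h'
  exact List.map_injective_iff.mpr PNat.coe_injective h'

lemma profile_map_range' (f : ℕ → ℤ) (s m : ℕ) :
    profile ((List.range' s m).map f) = (List.range' s m).map
      fun i => (Multiset.Icc (i + 1) (s + m - 1)).map fun j => (f i - f j).natAbs := by
  induction m generalizing s with
  | zero => rfl
  | succ m ih =>
    rw [List.range'_succ, List.map_cons, profile_cons, ih, List.map_cons,
      show s + 1 + m - 1 = s + (m + 1) - 1 by omega]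
    congr 1
    have hIcc : Multiset.Icc (s + 1) (s + (m + 1) - 1) = ↑(List.range' (s + 1) m) := by
      change ((List.range' (s + 1) (s + (m + 1) - 1 + 1 - (s + 1)) : List ℕ) : Multiset ℕ) = _
      congr 2
      omega
    rw [dists, hIcc, Multiset.map_coe, Multiset.map_coe, List.map_map]
    rfl

lemma profile_positions (n : ℕ) (v : Word) :
    profile (positions n v) = (List.range' 1 n).map (iplus n v) := by
  rw [positions, profile_map_range', Nat.add_sub_cancel_left]
  refine List.map_congr_left fun i _ => Multiset.map_congr rfl fun j _ => ?_
  simp only [Nat.dist]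
  omega

lemma crossEq_iff_profile_eq {n : ℕ} {u v : Word} :
    CrossEq n u v ↔ profile (positions n u) = profile (positions n v) := by
  rw [profile_positions, profile_positions, List.map_inj_left, CrossEq]
  refine forall_congr' fun i =>
    ⟨fun h hi => ?_, fun h hi1 hi2 => h (List.mem_range'_1.mpr ⟨hi1, by omega⟩)⟩
  obtain ⟨hi1, -⟩ := List.mem_range'_1.mp hi
  rcases Nat.lt_or_ge i n with hin | hin
  · exact h hi1 (by omega)
  · simp [iplus, Multiset.Icc_eq_zero (show ¬ i + 1 ≤ n by omega)]

theorem ncard_crossClass (n : ℕ) (u : Word) :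
    {v : Word | IsPerm n v ∧ CrossEq n u v}.ncard =
      (listingsWithProfile ((Finset.Icc 1 n).map Nat.castEmbedding)
        (profile (positions n u))).card := by
  have hS : {v : Word | IsPerm n v ∧ CrossEq n u v} =
      {v | IsPerm n v} ∩ positions n ⁻¹' {l | profile l = profile (positions n u)} := by
    ext v
    simp [crossEq_iff_profile_eq, eq_comm]
  rw [hS, ← ((positions_injOn n).mono Set.inter_subset_left).ncard_image,
    Set.image_inter_preimage, image_positions, ← Set.ncard_coe_finset]
  congr 1
  ext l
  simp [mem_listingsWithProfile]

end CrossClass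

/-- the cardinality of a cross equivalence class is a power of 2. -/
theorem crossEq_class_card_pow_two (n : ℕ) (u : Word) (hu : IsPerm n u) :
    ∃ k : ℕ, {v : Word | IsPerm n v ∧ CrossEq n u v}.ncard = 2 ^ k := by
  rw [CrossClass.ncard_crossClass]
  refine (CrossClass.card_listingsWithProfile _ _).resolve_left
    (Finset.card_ne_zero.mpr ⟨CrossClass.positions n u, ?_⟩)
  exact CrossClass.mem_listingsWithProfile.mpr ⟨CrossClass.coe_positions hu, rfl⟩
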